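/- Let n ≥ 7 and let φ₀(ξ) = α(n−2)/(|ξ|² + β(n−2)) for ξ ∈ ℝⁿ (with α, β the Bizoń–Biernat constants in dimension d = n − 2), and let g(ξ) = (|ξ|² + β(n−2))^{−2}. With Λf(ξ) = ξ·∇f(ξ) and V(ξ) = 3(n−4)φ₀(ξ)(2 − |ξ|²φ₀(ξ)), the pair 𝐠 = (g, Λg + 3g) satisfies the eigen-equations (−Λ − 2)g + (Λg + 3g) = g and Δg + V g + (−Λ − 3)(Λg + 3g) = Λg + 3g, i.e., 𝐠 is an eigenfunction with eigenvalue 1 of the linearized operator in similarity variables. -/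

import Mathlib

noncomputable section

abbrev E (n : ℕ) := EuclideanSpace ℝ (Fin n)

def fourierI (n : ℕ) (u : E n → ℝ) (ξ : E n) : ℂ :=
  ∫ x : E n, Complex.exp (-2 * Real.pi * Complex.I * ((inner ℝ x ξ : ℝ) : ℂ)) * (u x : ℂ)

/-- Homogeneous Sobolev norm of order `s` on `ℝⁿ`. -/
def hnorm (n : ℕ) (s : ℝ) (u : E n → ℝ) : ℝ :=
  (∫ ξ : E n, ‖ξ‖ ^ (2 * s) * ‖fourierI n u ξ‖ ^ 2) ^ ((1:ℝ)/2)

/-- The dilation operator `Λf(ξ) = ξ·∇f(ξ)`. -/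
def Lam {n : ℕ} (f : E n → ℝ) (ξ : E n) : ℝ := fderiv ℝ f ξ ξ

/-- The Laplacian. -/
def lap {n : ℕ} (f : E n → ℝ) (x : E n) : ℝ :=
  ∑ i : Fin n, fderiv ℝ (fun y => fderiv ℝ f y (EuclideanSpace.single i 1)) x
    (EuclideanSpace.single i 1)

def alphaC (d : ℕ) : ℝ := 2 * (1 + Real.sqrt (((d:ℝ) - 4) / (3 * ((d:ℝ) - 2))))

def betaC (d : ℕ) : ℝ := (1/3) * (2*(d:ℝ) - 8 + Real.sqrt (3 * ((d:ℝ) - 2) * ((d:ℝ) - 4)))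

def phiBB (d : ℕ) (ρ : ℝ) : ℝ := alphaC d / (ρ^2 + betaC d)

/- ### Auxiliary lemmas -/

lemma derivInvPow (β x c : ℝ) (m : ℕ) (hm : 1 ≤ m) (hx : x + β ≠ 0) :
    HasDerivAt (fun t : ℝ => c * (((t+β)^m)⁻¹))
      (-c * m * (((x+β)^(m+1))⁻¹)) x := by
  have h0 : HasDerivAt (fun t : ℝ => (t+β)^m) ((m:ℝ)*(x+β)^(m-1)) x := by
    simpa using ((hasDerivAt_id x).add_const β).fun_pow m
  have h1 := (h0.inv (pow_ne_zero m hx)).const_mul c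
  refine h1.congr_deriv ?_
  have h2 : ((x+β)^m)^2 = (x+β)^(m+1) * (x+β)^(m-1) := by
    rw [← pow_mul, ← pow_add]; congr 1; omega
  field_simp [h2]
  obtain ⟨k, rfl⟩ : ∃ k, m = k + 1 := ⟨m - 1, by omega⟩
  simp only [Nat.add_sub_cancel]
  ring

lemma fdInvPow {n : ℕ} (β c : ℝ) (m : ℕ) (hm : 1 ≤ m) (ξ : E n) (hβ : ‖ξ‖^2 + β ≠ 0) :
    HasFDerivAt (fun y : E n => c * ((‖y‖^2+β)^m)⁻¹)
      ((-c * m * ((‖ξ‖^2+β)^(m+1))⁻¹) • ((2:ℝ) • (innerSL ℝ ξ))) ξ := by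
  have h := (derivInvPow β (‖ξ‖^2) c m hm hβ).comp_hasFDerivAt ξ
      ((hasStrictFDerivAt_norm_sq ξ).hasFDerivAt)
  refine h.congr_fderiv ?_
  ext v
  simp [smul_smul]
  ring

lemma fd_mul_coord {n : ℕ} (β c : ℝ) (m : ℕ) (hm : 1 ≤ m) (i : Fin n) (ξ : E n)
    (hβ : ‖ξ‖^2 + β ≠ 0) :
    fderiv ℝ (fun y : E n => c * ((‖y‖^2+β)^m)⁻¹ * y i) ξ (EuclideanSpace.single i 1)
      = -c * m * ((‖ξ‖^2+β)^(m+1))⁻¹ * 2 * (ξ i)^2 + c * ((‖ξ‖^2+β)^m)⁻¹ := by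
  have h : HasFDerivAt (fun y : E n => c * ((‖y‖^2+β)^m)⁻¹ * y i)
      ((c * ((‖ξ‖^2+β)^m)⁻¹) • (EuclideanSpace.proj i : E n →L[ℝ] ℝ)
        + ((-c * m * ((‖ξ‖^2+β)^(m+1))⁻¹) • ((2:ℝ) • (innerSL ℝ ξ))).smulRight (ξ i)) ξ :=
    (fdInvPow β c m hm ξ hβ).mul' ((EuclideanSpace.proj i : E n →L[ℝ] ℝ).hasFDerivAt)
  rw [h.fderiv]
  have h1 : (inner ℝ ξ (EuclideanSpace.single i (1:ℝ)) : ℝ) = ξ i := by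
    rw [EuclideanSpace.inner_single_right]; simp
  simp [h1, smul_smul]
  ring

lemma fd_lamh {n : ℕ} (β c1 c2 : ℝ) (m k : ℕ) (hm : 1 ≤ m) (hk : 1 ≤ k) (ξ : E n)
    (hβ : ‖ξ‖^2 + β ≠ 0) :
    fderiv ℝ (fun y : E n => c1 * ((‖y‖^2+β)^m)⁻¹ * ‖y‖^2 + c2 * ((‖y‖^2+β)^k)⁻¹) ξ ξ
      = -c1 * m * ((‖ξ‖^2+β)^(m+1))⁻¹ * 2 * ‖ξ‖^2 * ‖ξ‖^2
        + c1 * ((‖ξ‖^2+β)^m)⁻¹ * 2 * ‖ξ‖^2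
        + -c2 * k * ((‖ξ‖^2+β)^(k+1))⁻¹ * 2 * ‖ξ‖^2 := by
  have h1 := (fdInvPow β c1 m hm ξ hβ).fun_mul' ((hasStrictFDerivAt_norm_sq ξ).hasFDerivAt)
  have h := h1.fun_add (fdInvPow β c2 k hk ξ hβ)
  rw [h.fderiv]
  simp only [ContinuousLinearMap.add_apply, ContinuousLinearMap.smul_apply,
    ContinuousLinearMap.smulRight_apply, innerSL_apply_apply, real_inner_self_eq_norm_sq,
    smul_eq_mul, op_smul_eq_mul]
  ring

lemma lam_val {n : ℕ} (B : ℝ) (ξ : E n) (hB : ‖ξ‖^2 + B ≠ 0) :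
    Lam (fun y : E n => 1 * ((‖y‖^2+B)^2)⁻¹) ξ = -4 * ((‖ξ‖^2+B)^3)⁻¹ * ‖ξ‖^2 := by
  rw [Lam, (fdInvPow B 1 2 (by norm_num) ξ hB).fderiv]
  simp only [ContinuousLinearMap.smul_apply, innerSL_apply_apply, real_inner_self_eq_norm_sq,
    smul_eq_mul]
  norm_num
  ring

lemma coord_val {n : ℕ} (B : ℝ) (i : Fin n) (y : E n) (hB : ‖y‖^2 + B ≠ 0) :
    fderiv ℝ (fun z : E n => 1 * ((‖z‖^2+B)^2)⁻¹) y (EuclideanSpace.single i 1)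
      = -4 * ((‖y‖^2+B)^3)⁻¹ * y i := by
  rw [(fdInvPow B 1 2 (by norm_num) y hB).fderiv]
  have h1 : (inner ℝ y (EuclideanSpace.single i (1:ℝ)) : ℝ) = y i := by
    rw [EuclideanSpace.inner_single_right]; simp
  simp only [ContinuousLinearMap.smul_apply, innerSL_apply_apply, smul_eq_mul, h1]
  norm_num
  ring

lemma sum_sq_eq_norm_sq {n : ℕ} (ξ : E n) : ∑ i, (ξ i)^2 = ‖ξ‖^2 := by
  rw [EuclideanSpace.norm_eq, Real.sq_sqrt (by positivity)]; simp [Real.norm_eq_abs, sq_abs]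

lemma lap_val {n : ℕ} (B : ℝ) (hB : ∀ y : E n, ‖y‖^2 + B ≠ 0) (ξ : E n) :
    lap (fun y : E n => 1 * ((‖y‖^2+B)^2)⁻¹) ξ
      = 24 * ((‖ξ‖^2+B)^4)⁻¹ * ‖ξ‖^2 + (n:ℝ) * (-4 * ((‖ξ‖^2+B)^3)⁻¹) := by
  rw [lap]
  have hterm : ∀ i : Fin n,
      fderiv ℝ (fun y : E n => fderiv ℝ (fun z : E n => 1 * ((‖z‖^2+B)^2)⁻¹) y
        (EuclideanSpace.single i 1)) ξ (EuclideanSpace.single i 1)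
      = 24 * ((‖ξ‖^2+B)^4)⁻¹ * (ξ i)^2 + (-4 * ((‖ξ‖^2+B)^3)⁻¹) := by
    intro i
    have hfun : (fun y : E n => fderiv ℝ (fun z : E n => 1 * ((‖z‖^2+B)^2)⁻¹) y
        (EuclideanSpace.single i 1)) = fun y : E n => (-4) * ((‖y‖^2+B)^3)⁻¹ * y i :=
      funext fun y => coord_val B i y (hB y)
    rw [hfun, fd_mul_coord B (-4) 3 (by norm_num) i ξ (hB ξ)]
    push_cast
    ring
  rw [Finset.sum_congr rfl (fun i _ => hterm i), Finset.sum_add_distrib, ← Finset.mul_sum,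
    sum_sq_eq_norm_sq, Finset.sum_const, Finset.card_univ, Fintype.card_fin, nsmul_eq_mul]

lemma lamh_val {n : ℕ} (B : ℝ) (hB : ∀ y : E n, ‖y‖^2 + B ≠ 0) (ξ : E n) :
    Lam (fun y : E n => Lam (fun z : E n => 1 * ((‖z‖^2+B)^2)⁻¹) y
        + 3 * (1 * ((‖y‖^2+B)^2)⁻¹)) ξ
      = 24 * ((‖ξ‖^2+B)^4)⁻¹ * ‖ξ‖^2 * ‖ξ‖^2 + (-8) * ((‖ξ‖^2+B)^3)⁻¹ * ‖ξ‖^2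
        + (-12) * ((‖ξ‖^2+B)^3)⁻¹ * ‖ξ‖^2 := by
  have hfun : (fun y : E n => Lam (fun z : E n => 1 * ((‖z‖^2+B)^2)⁻¹) y
      + 3 * (1 * ((‖y‖^2+B)^2)⁻¹))
      = fun y : E n => (-4) * ((‖y‖^2+B)^3)⁻¹ * ‖y‖^2 + 3 * ((‖y‖^2+B)^2)⁻¹ := by
    funext y
    rw [lam_val B y (hB y)]
    ring
  rw [Lam, hfun, fd_lamh B (-4) 3 3 2 (by norm_num) (by norm_num) ξ (hB ξ)]
  norm_num
  ring

theorem alg (d s t q α β nr : ℝ) (hnr : nr = d + 2) (hq : q = t + β) (hα : α = 2*(1+s))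
    (hβ3 : 3*β = 2*d-8+3*(d-2)*s) (hs2 : 3*(d-2)*s^2 = d-4) (hqne : q ≠ 0) :
    (24*((q^4)⁻¹)*t + nr*(-4*((q^3)⁻¹)))
      + (3*(nr-4) * (α/q) * (2 - t*(α/q))) * ((q^2)⁻¹)
      - (24*((q^4)⁻¹)*t*t + (-8)*((q^3)⁻¹)*t + (-12)*((q^3)⁻¹)*t)
      - 3*((-4)*((q^3)⁻¹)*t + 3*((q^2)⁻¹))
      = (-4)*((q^3)⁻¹)*t + 3*((q^2)⁻¹) := by
  subst hnr hα
  field_simp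
  linear_combination (1)*(((-12)*q-4*(d+2)+12*(d-2)*(1+s)+24*t-12*β)*hq
    + (4*t-4*β)*hβ3 + ((-4)*t)*hs2)

/-- The symmetry mode 𝐠 = (g, Λg + 3g) is an eigenfunction with eigenvalue 1 of the
linearized operator in similarity variables. -/
theorem stmt2 (n : ℕ) (hn : 7 ≤ n)
    (φ₀ : E n → ℝ) (hφ : φ₀ = fun ξ => alphaC (n-2) / (‖ξ‖^2 + betaC (n-2)))
    (V : E n → ℝ) (hV : V = fun ξ => 3 * ((n:ℝ)-4) * φ₀ ξ * (2 - ‖ξ‖^2 * φ₀ ξ))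
    (g : E n → ℝ) (hg : g = fun ξ => (‖ξ‖^2 + betaC (n-2))^(-2 : ℤ)) :
    (∀ ξ, -(Lam g ξ) - 2 * g ξ + (Lam g ξ + 3 * g ξ) = g ξ) ∧
    (∀ ξ, lap g ξ + V ξ * g ξ - Lam (fun ξ' => Lam g ξ' + 3 * g ξ') ξ
        - 3 * (Lam g ξ + 3 * g ξ) = Lam g ξ + 3 * g ξ) := by
  have hn7 : (7:ℝ) ≤ (n:ℝ) := by exact_mod_cast hn
  have h2n : ((n-2:ℕ):ℝ) = (n:ℝ) - 2 := by
    have : (2:ℕ) ≤ n := by omega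
    push_cast [this]
    ring
  set d : ℝ := (n:ℝ) - 2 with hd
  set s : ℝ := Real.sqrt ((d - 4) / (3 * (d - 2))) with hsdef
  have hs0 : 0 ≤ s := Real.sqrt_nonneg _
  have hs2 : 3*(d-2)*s^2 = d-4 := by
    have hnum : (0:ℝ) ≤ (d-4)/(3*(d-2)) := by
      apply div_nonneg <;> nlinarith
    have h32 : 3*(d-2) ≠ 0 := by nlinarith
    have h2' : d-2 ≠ 0 := by nlinarith
    rw [hsdef, Real.sq_sqrt hnum]
    field_simp
  have hα : alphaC (n-2) = 2*(1+s) := by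
    rw [alphaC, h2n, hsdef]
  have h3s : 0 ≤ 3*(d-2)*s := by nlinarith
  have hβ3 : 3 * betaC (n-2) = 2*d-8+3*(d-2)*s := by
    rw [betaC, h2n]
    have hsq : 3*(d-2)*(d-4) = (3*(d-2)*s)^2 := by linear_combination (-3*(d-2))*hs2
    rw [hsq, Real.sqrt_sq h3s]
    ring
  set B : ℝ := betaC (n-2) with hBdef
  have hB0 : 0 < B := by nlinarith
  have hqne : ∀ ξ : E n, ‖ξ‖^2 + B ≠ 0 := by
    intro ξ
    have := sq_nonneg ‖ξ‖
    nlinarith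
  have hgfun : g = fun ξ : E n => 1 * ((‖ξ‖^2 + B)^2)⁻¹ := by
    rw [hg]
    funext ξ
    rw [one_mul, zpow_neg]
    norm_cast
  constructor
  · intro ξ; ring
  · intro ξ
    rw [hgfun, hV, hφ, hα]
    simp only []
    rw [lap_val B hqne ξ, lamh_val B hqne ξ, lam_val B ξ (hqne ξ)]
    have := alg d s (‖ξ‖^2) (‖ξ‖^2 + B) (2*(1+s)) B (n:ℝ)
      (by rw [hd]; ring) rfl rfl hβ3 hs2 (hqne ξ)
    linear_combination this
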